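/- For the Vilenkin system, the Fejér kernel at index M_n satisfies: K_{M_n}(x) = M_t/(1 − r_t(x)) if x ∈ I_t \ I_{t+1} with x − x_t e_t ∈ I_n for some t < n; K_{M_n}(x) = (M_n + 1)/2 if x ∈ I_n; and K_{M_n}(x) = 0 otherwise. -/

import Mathlib

noncomputable section
open MeasureTheory Finset Filter

namespace VilPaper

instance (n : ℕ) : TopologicalSpace (ZMod n) := ⊥
instance (n : ℕ) : DiscreteTopology (ZMod n) := ⟨rfl⟩

variable (m : ℕ → ℕ)

abbrev mseq (k : ℕ) : ℕ := m k + 2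
abbrev G := ∀ k, ZMod (mseq m k)

instance : IsTopologicalAddGroup (G m) := by infer_instance
instance : CompactSpace (G m) := by infer_instance
instance : MeasurableSpace (G m) := borel _
instance : BorelSpace (G m) := ⟨rfl⟩

def μV : Measure (G m) := Measure.addHaarMeasure ⊤

/-- The generalized number system: `M_0 = 1`, `M_{k+1} = m_k M_k`. -/
def Mgen : ℕ → ℕ
  | 0 => 1
  | k + 1 => mseq m k * Mgen k

/-- The cylinder sets `I_n(x)`. -/
def cyl (n : ℕ) (x : G m) : Set (G m) := {y | ∀ i < n, y i = x i}

/-- `I_n := I_n(0)`. -/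
def Icyl (n : ℕ) : Set (G m) := cyl m n 0

/-- Generalized Rademacher functions `r_k(x) = exp(2πi x_k / m_k)`. -/
def rad (k : ℕ) (x : G m) : ℂ :=
  Complex.exp (2 * Real.pi * Complex.I * ((x k).val : ℂ) / (mseq m k : ℂ))

/-- The `j`-th digit `n_j` of `n` in the number system `(M_k)`. -/
def digit (n j : ℕ) : ℕ := n / Mgen m j % mseq m j

/-- `|n| = max { j : n_j ≠ 0 }`. -/
def ndeg (n : ℕ) : ℕ := sSup {j | digit m n j ≠ 0}

/-- The Vilenkin system `ψ_n = ∏ r_k^{n_k}`. -/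
def psi (n : ℕ) (x : G m) : ℂ := ∏ k ∈ Finset.range (n + 1), rad m k x ^ digit m n k

/-- Dirichlet kernels `D_n = ∑_{k<n} ψ_k`. -/
def Dker (n : ℕ) (x : G m) : ℂ := ∑ k ∈ Finset.range n, psi m k x

/-- Fejér kernels `K_n = (1/n) ∑_{k=1}^n D_k`. -/
def Kker (n : ℕ) (x : G m) : ℂ := (n : ℂ)⁻¹ * ∑ k ∈ Finset.range n, Dker m (k + 1) x

/-- Vilenkin–Fourier coefficients. -/
def fcoef (f : G m → ℂ) (k : ℕ) : ℂ := ∫ x, f x * (starRingEnd ℂ) (psi m k x) ∂ μV m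

/-- Partial sums `S_n f` of the Vilenkin–Fourier series. -/
def partialSum (f : G m → ℂ) (n : ℕ) (x : G m) : ℂ :=
  ∑ k ∈ Finset.range n, fcoef m f k * psi m k x

/-- Fejér means `σ_n f = (1/n) ∑_{k=1}^n S_k f`. -/
def fejer (f : G m → ℂ) (n : ℕ) (x : G m) : ℂ :=
  (n : ℂ)⁻¹ * ∑ k ∈ Finset.range n, partialSum m f (k + 1) x

/-- `Q_n = ∑_{k<n} q_k`. -/
def Qsum (q : ℕ → ℝ) (n : ℕ) : ℝ := ∑ k ∈ Finset.range n, q k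

/-- The `T` means `T_n f = (1/Q_n) ∑_{k<n} q_k S_k f`. -/
def Tmean (q : ℕ → ℝ) (f : G m → ℂ) (n : ℕ) (x : G m) : ℂ :=
  (Qsum q n : ℂ)⁻¹ * ∑ k ∈ Finset.range n, (q k : ℂ) * partialSum m f k x

/-- Convolution on `G_m`. -/
def conv (f g : G m → ℂ) (x : G m) : ℂ := ∫ t, f t * g (x - t) ∂ μV m

/-- The modulus of continuity `ω_p(δ, f) = sup_{t ∈ I_s, 1/M_s < δ} ‖f(·-t) - f‖_p`. -/
def omega (p : ENNReal) (f : G m → ℂ) (δ : ℝ) : ENNReal :=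
  ⨆ (s : ℕ) (_ : (1 : ℝ) / (Mgen m s : ℝ) < δ) (t : G m) (_ : t ∈ Icyl m s),
    eLpNorm (fun x => f (x - t) - f x) p (μV m)

/-- The Lipschitz class `Lip(α, p)`. -/
def LipClass (p : ENNReal) (α : ℝ) (f : G m → ℂ) : Prop :=
  MemLp f p (μV m) ∧ ∃ C : ℝ, ∀ δ : ℝ, 0 < δ → omega m p f δ ≤ ENNReal.ofReal (C * δ ^ α)

/-!
Write `g_k = ∑_{a < m_k} r_k^a` and `h_k = ∑_{a < m_k} (m_k - 1 - a) r_k^a`. For `l = q M_n + j`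
with `q < m_n`, `j < M_n` one has `ψ_l = r_n^q ψ_j`, so splitting `[0, M_{n+1})` into `m_n` blocks
of length `M_n` gives `D_{M_{n+1}} = g_n D_{M_n}` and, since
`M_n K_{M_n} = ∑_{l < M_n} (M_n - l) ψ_l`, also
`M_{n+1} K_{M_{n+1}} = g_n M_n K_{M_n} + M_n h_n D_{M_n}`.
As `r_k(x)` is an `m_k`-th root of unity that equals `1` exactly when `x_k = 0`, we get
`g_k(x) = m_k` and `2 h_k(x) = m_k (m_k - 1)` if `x_k = 0`, while `g_k(x) = 0` and
`h_k(x) = m_k / (1 - r_k(x))` otherwise. Hence `D_{M_n} = M_n 1_{I_n}`, and running the recursion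
from the first nonzero coordinate `t` of `x` gives
`M_n K_{M_n}(x) = M_t M_{t+1} / (1 - r_t(x)) · ∏_{t < k < n} g_k(x)`,
which is `M_t M_n / (1 - r_t(x))` or `0` according as `x_k = 0` for all `t < k < n` or not.
-/

theorem sum_range_mul_eq_sum_sum {M : Type*} [AddCommMonoid M] (f : ℕ → M) (a b : ℕ) :
    ∑ l ∈ range (a * b), f l = ∑ q ∈ range a, ∑ r ∈ range b, f (q * b + r) := by
  induction a with
  | zero => simp
  | succ a ih => rw [Nat.succ_mul, Finset.sum_range_add, ih, Finset.sum_range_succ]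

theorem sum_range_sum_range_succ {R : Type*} [CommRing R] (f : ℕ → R) (N : ℕ) :
    ∑ k ∈ range N, ∑ l ∈ range (k + 1), f l = ∑ l ∈ range N, ((N : R) - l) * f l := by
  induction N with
  | zero => simp
  | succ N ih =>
    rw [Finset.sum_range_succ, ih, Finset.sum_range_succ _ N, Finset.sum_range_succ, ← add_assoc,
      ← Finset.sum_add_distrib]
    push_cast
    congr 1
    · exact Finset.sum_congr rfl fun l _ => by ring
    · ring

theorem geom_sum_eq_zero_of_pow_eq_one {K : Type*} [DivisionRing K] {r : K} (hr : r ≠ 1) {M : ℕ}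
    (hM : r ^ M = 1) : ∑ a ∈ range M, r ^ a = 0 := by
  rw [geom_sum_eq hr, hM, sub_self, zero_div]

theorem sum_range_succ_sub_one_sub_mul {R : Type*} [CommRing R] (f : ℕ → R) (M : ℕ) :
    ∑ a ∈ range (M + 1), ((↑(M + 1) : R) - 1 - a) * f a
      = ∑ a ∈ range M, ((M : R) - 1 - a) * f (a + 1) + M * f 0 := by
  rw [Finset.sum_range_succ']
  push_cast
  congr 1
  · exact Finset.sum_congr rfl fun a _ => by ring
  · ring

theorem one_sub_mul_sum_range_sub_one_sub_mul_pow {R : Type*} [CommRing R] (r : R) (M : ℕ) :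
    (1 - r) * ∑ a ∈ range M, ((M : R) - 1 - a) * r ^ a = M - ∑ a ∈ range M, r ^ a := by
  induction M with
  | zero => simp
  | succ M ih =>
    simp only [sum_range_succ_sub_one_sub_mul, pow_succ', mul_left_comm _ r, ← Finset.mul_sum,
      geom_sum_succ]
    push_cast
    linear_combination r * ih

theorem two_mul_sum_range_sub_one_sub {R : Type*} [CommRing R] (M : ℕ) :
    2 * ∑ a ∈ range M, ((M : R) - 1 - a) = M * (M - 1) := by
  induction M with
  | zero => simp
  | succ M ih =>
    have hshift := sum_range_succ_sub_one_sub_mul (fun _ => (1 : R)) M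
    simp only [mul_one] at hshift
    rw [hshift]
    push_cast
    linear_combination ih

def radSum (k : ℕ) (x : G m) : ℂ := ∑ a ∈ range (mseq m k), rad m k x ^ a

def radWeightedSum (k : ℕ) (x : G m) : ℂ :=
  ∑ a ∈ range (mseq m k), ((mseq m k : ℂ) - 1 - a) * rad m k x ^ a

section
variable {m}

theorem Mgen_succ (n : ℕ) : Mgen m (n + 1) = mseq m n * Mgen m n := rfl

theorem Mgen_eq_prod (n : ℕ) : Mgen m n = ∏ k ∈ range n, mseq m k := by
  induction n with
  | zero => rfl
  | succ n ih => rw [Mgen_succ, Finset.prod_range_succ, ih, mul_comm]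

theorem Mgen_pos (n : ℕ) : 0 < Mgen m n := by
  rw [Mgen_eq_prod]
  exact Finset.prod_pos fun k _ => Nat.zero_lt_succ _

theorem Mgen_mul_prod_Ico {a b : ℕ} (h : a ≤ b) :
    Mgen m a * ∏ k ∈ Ico a b, mseq m k = Mgen m b := by
  rw [Mgen_eq_prod, Mgen_eq_prod, Finset.prod_range_mul_prod_Ico _ h]

theorem Mgen_cast_ne_zero (n : ℕ) : (Mgen m n : ℂ) ≠ 0 :=
  Nat.cast_ne_zero.mpr (Mgen_pos n).ne'

theorem Mgen_mono : Monotone (Mgen m) := fun _ _ h =>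
  Nat.le_of_dvd (Mgen_pos _) (Dvd.intro _ (Mgen_mul_prod_Ico h))

theorem lt_Mgen (n : ℕ) : n < Mgen m n := by
  induction n with
  | zero => exact Mgen_pos 0
  | succ n ih =>
    rw [Mgen_succ]
    nlinarith [Nat.le_add_left 2 (m n)]

theorem digit_eq_zero_of_lt {l k : ℕ} (h : l < Mgen m k) : digit m l k = 0 := by
  rw [digit, Nat.div_eq_of_lt h, Nat.zero_mod]

theorem digit_mul_Mgen_add_of_lt {q r k n : ℕ} (hk : k < n) :
    digit m (q * Mgen m n + r) k = digit m r k := by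
  obtain ⟨c, hc⟩ := Dvd.intro _ (Mgen_mul_prod_Ico (m := m) hk)
  rw [digit, digit, hc, Mgen_succ,
    show q * (mseq m k * Mgen m k * c) + r = r + Mgen m k * (q * c * mseq m k) by ring,
    Nat.add_mul_div_left _ _ (Mgen_pos k), Nat.add_mul_mod_self_right]

theorem digit_mul_Mgen_add_self {q r n : ℕ} (hr : r < Mgen m n) (hq : q < mseq m n) :
    digit m (q * Mgen m n + r) n = q := by
  rw [digit, add_comm, mul_comm, Nat.add_mul_div_left _ _ (Mgen_pos n), Nat.div_eq_of_lt hr,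
    zero_add, Nat.mod_eq_of_lt hq]

/-- Only the digits of `l` below `N` can be nonzero. -/
theorem psi_eq_prod_range {l N : ℕ} (h : l < Mgen m N) (x : G m) :
    psi m l x = ∏ k ∈ range N, rad m k x ^ digit m l k := by
  have hdigit : ∀ k ≥ min N (l + 1), rad m k x ^ digit m l k = 1 := fun k hk => by
    rw [digit_eq_zero_of_lt, pow_zero]
    rcases min_le_iff.mp hk with hNk | hlk
    · exact h.trans_le (Mgen_mono hNk)
    · exact (Nat.lt_of_succ_le hlk).trans (lt_Mgen k)
  rw [psi, Finset.eventually_constant_prod hdigit (min_le_right _ _),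
    Finset.eventually_constant_prod hdigit (min_le_left _ _)]

theorem psi_mul_Mgen_add {q r n : ℕ} (hr : r < Mgen m n) (hq : q < mseq m n) (x : G m) :
    psi m (q * Mgen m n + r) x = rad m n x ^ q * psi m r x := by
  have hlt : q * Mgen m n + r < Mgen m (n + 1) := by
    rw [Mgen_succ]
    nlinarith
  rw [psi_eq_prod_range hlt, psi_eq_prod_range hr, Finset.prod_range_succ,
    digit_mul_Mgen_add_self hr hq, mul_comm]
  exact congrArg _ (Finset.prod_congr rfl fun k hk => by
    rw [digit_mul_Mgen_add_of_lt (Finset.mem_range.mp hk)])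

theorem psi_zero (x : G m) : psi m 0 x = 1 := by
  simp [psi, digit]

theorem rad_eq_stdAddChar (k : ℕ) (x : G m) : rad m k x = ZMod.stdAddChar (x k) := by
  rw [ZMod.stdAddChar_apply, ZMod.toCircle_apply]
  rfl

theorem rad_pow_mseq (k : ℕ) (x : G m) : rad m k x ^ mseq m k = 1 := by
  rw [rad_eq_stdAddChar, ← AddChar.map_nsmul_eq_pow, nsmul_eq_mul, ZMod.natCast_self, zero_mul,
    AddChar.map_zero_eq_one]

theorem rad_eq_one_iff {k : ℕ} {x : G m} : rad m k x = 1 ↔ x k = 0 := by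
  rw [rad_eq_stdAddChar, ← AddChar.map_zero_eq_one (ZMod.stdAddChar (N := mseq m k)),
     ZMod.injective_stdAddChar.eq_iff]

theorem mem_Icyl_iff {n : ℕ} {x : G m} : x ∈ Icyl m n ↔ ∀ i < n, x i = 0 := Iff.rfl

theorem mem_Icyl_succ {n : ℕ} {x : G m} :
    x ∈ Icyl m (n + 1) ↔ x ∈ Icyl m n ∧ x n = 0 := by
  simp only [mem_Icyl_iff, Nat.lt_succ_iff_lt_or_eq, or_imp, forall_and, forall_eq]

theorem mem_Icyl_diff_succ {n : ℕ} {x : G m} :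
    x ∈ Icyl m n \ Icyl m (n + 1) ↔ x ∈ Icyl m n ∧ x n ≠ 0 := by
  rw [Set.mem_sdiff, mem_Icyl_succ]
  tauto

theorem exists_lt_mem_Icyl_diff {n : ℕ} {x : G m} (hx : x ∉ Icyl m n) :
    ∃ t < n, x ∈ Icyl m t \ Icyl m (t + 1) := by
  classical
  have hex : ∃ i, i < n ∧ x i ≠ 0 := by simpa [mem_Icyl_iff] using hx
  refine ⟨Nat.find hex, (Nat.find_spec hex).1,
    mem_Icyl_diff_succ.mpr ⟨fun i hi => ?_, (Nat.find_spec hex).2⟩⟩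
  by_contra h
  exact Nat.find_min hex hi ⟨hi.trans (Nat.find_spec hex).1, h⟩

theorem Icyl_antitone : Antitone (Icyl m) := fun _ _ h _ hx i hi => hx i (hi.trans_le h)

theorem radSum_of_eq_zero {k : ℕ} {x : G m} (h : x k = 0) : radSum m k x = mseq m k := by
  simp [radSum, rad_eq_one_iff.mpr h]

theorem radSum_of_ne_zero {k : ℕ} {x : G m} (h : x k ≠ 0) : radSum m k x = 0 :=
  geom_sum_eq_zero_of_pow_eq_one (rad_eq_one_iff.not.mpr h) (rad_pow_mseq k x)

theorem two_mul_radWeightedSum_of_eq_zero {k : ℕ} {x : G m} (h : x k = 0) :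
    2 * radWeightedSum m k x = mseq m k * ((mseq m k : ℂ) - 1) := by
  simp only [radWeightedSum, rad_eq_one_iff.mpr h, one_pow, mul_one]
  exact two_mul_sum_range_sub_one_sub _

theorem radWeightedSum_of_ne_zero {k : ℕ} {x : G m} (h : x k ≠ 0) :
    radWeightedSum m k x = mseq m k / (1 - rad m k x) := by
  have hr : rad m k x ≠ 1 := rad_eq_one_iff.not.mpr h
  rw [eq_div_iff (sub_ne_zero.mpr hr.symm), mul_comm, radWeightedSum,
    one_sub_mul_sum_range_sub_one_sub_mul_pow, geom_sum_eq_zero_of_pow_eq_one hr (rad_pow_mseq k x),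
    sub_zero]

theorem Dker_Mgen_succ (n : ℕ) (x : G m) :
    Dker m (Mgen m (n + 1)) x = radSum m n x * Dker m (Mgen m n) x := by
  rw [Dker, Mgen_succ, sum_range_mul_eq_sum_sum, radSum, Dker, Finset.sum_mul_sum]
  exact Finset.sum_congr rfl fun q hq => Finset.sum_congr rfl fun r hr =>
    psi_mul_Mgen_add (Finset.mem_range.mp hr) (Finset.mem_range.mp hq) x

open Classical in
theorem Dker_Mgen (n : ℕ) (x : G m) :
    Dker m (Mgen m n) x = if x ∈ Icyl m n then (Mgen m n : ℂ) else 0 := by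
  induction n with
  | zero => simp [Dker, Mgen, psi_zero, Icyl, cyl]
  | succ n ih =>
    rw [Dker_Mgen_succ, ih, mem_Icyl_succ]
    by_cases hx : x ∈ Icyl m n <;> by_cases hn : x n = 0 <;>
      simp [hx, hn, radSum_of_eq_zero, radSum_of_ne_zero, Mgen_succ]

theorem natCast_mul_Kker (N : ℕ) (x : G m) :
    (N : ℂ) * Kker m N x = ∑ l ∈ range N, ((N : ℂ) - l) * psi m l x := by
  rcases eq_or_ne N 0 with rfl | hN
  · simp
  · rw [Kker, mul_inv_cancel_left₀ (Nat.cast_ne_zero.mpr hN)]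
    exact sum_range_sum_range_succ _ N

theorem Mgen_mul_Kker_Mgen_succ (n : ℕ) (x : G m) :
    (Mgen m (n + 1) : ℂ) * Kker m (Mgen m (n + 1)) x
      = radSum m n x * ((Mgen m n : ℂ) * Kker m (Mgen m n) x)
        + Mgen m n * radWeightedSum m n x * Dker m (Mgen m n) x := by
  rw [natCast_mul_Kker, natCast_mul_Kker, Mgen_succ, sum_range_mul_eq_sum_sum]
  have hterm : ∀ q ∈ range (mseq m n), ∀ r ∈ range (Mgen m n),
      (((mseq m n * Mgen m n : ℕ) : ℂ) - ((q * Mgen m n + r : ℕ) : ℂ)) * psi m (q * Mgen m n + r) x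
        = rad m n x ^ q * ((Mgen m n - r) * psi m r x)
          + ((mseq m n : ℂ) - 1 - q) * rad m n x ^ q * (Mgen m n * psi m r x) := by
    intro q hq r hr
    rw [psi_mul_Mgen_add (Finset.mem_range.mp hr) (Finset.mem_range.mp hq)]
    push_cast
    ring
  rw [Finset.sum_congr rfl fun q hq => Finset.sum_congr rfl (hterm q hq)]
  simp only [Finset.sum_add_distrib]
  rw [← Finset.sum_mul_sum, ← Finset.sum_mul_sum, radSum, radWeightedSum, Dker,
    ← Finset.mul_sum]
  ring

theorem Mgen_mul_Kker_Mgen_of_mem_Icyl {n : ℕ} {x : G m} (hx : x ∈ Icyl m n) :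
    (Mgen m n : ℂ) * Kker m (Mgen m n) x = Mgen m n * ((Mgen m n + 1) / 2) := by
  induction n with
  | zero => simp [Kker, Dker, Mgen, psi_zero]
  | succ n ih =>
    obtain ⟨hxn, hn⟩ := mem_Icyl_succ.mp hx
    rw [Mgen_mul_Kker_Mgen_succ, ih hxn, radSum_of_eq_zero hn, Dker_Mgen, if_pos hxn, Mgen_succ,
      Nat.cast_mul]
    linear_combination (Mgen m n : ℂ) ^ 2 / 2 * two_mul_radWeightedSum_of_eq_zero hn

theorem Mgen_mul_Kker_Mgen_of_mem_Icyl_diff {t n : ℕ} {x : G m} (htn : t < n)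
    (hx : x ∈ Icyl m t \ Icyl m (t + 1)) :
    (Mgen m n : ℂ) * Kker m (Mgen m n) x
      = (∏ k ∈ Ico (t + 1) n, radSum m k x) * (Mgen m t * Mgen m (t + 1) / (1 - rad m t x)) := by
  obtain ⟨ht, hxt⟩ := mem_Icyl_diff_succ.mp hx
  induction n, Nat.succ_le_of_lt htn using Nat.le_induction with
  | base =>
    rw [Mgen_mul_Kker_Mgen_succ, radSum_of_ne_zero hxt, radWeightedSum_of_ne_zero hxt, Dker_Mgen,
      if_pos ht, Finset.Ico_self, Finset.prod_empty, Mgen_succ]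
    push_cast
    ring
  | succ n hn ih =>
    rw [Mgen_mul_Kker_Mgen_succ, ih hn, Dker_Mgen, if_neg fun h => hx.2 (Icyl_antitone hn h),
      Finset.prod_Ico_succ_top hn]
    ring

theorem Kker_Mgen_of_mem_Icyl {n : ℕ} {x : G m} (hx : x ∈ Icyl m n) :
    Kker m (Mgen m n) x = ((Mgen m n : ℂ) + 1) / 2 :=
  mul_left_cancel₀ (Mgen_cast_ne_zero n) (Mgen_mul_Kker_Mgen_of_mem_Icyl hx)

theorem Kker_Mgen_of_update_mem {t n : ℕ} {x : G m} (htn : t < n)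
    (hx : x ∈ Icyl m t \ Icyl m (t + 1)) (hu : Function.update x t 0 ∈ Icyl m n) :
    Kker m (Mgen m n) x = (Mgen m t : ℂ) / (1 - rad m t x) := by
  have hzero : ∀ k ∈ Ico (t + 1) n, x k = 0 := fun k hk => by
    obtain ⟨htk, hkn⟩ := Finset.mem_Ico.mp hk
    simpa [Function.update_of_ne (Nat.ne_of_gt htk)] using hu k hkn
  have hprod : (Mgen m (t + 1) : ℂ) * ∏ k ∈ Ico (t + 1) n, radSum m k x = Mgen m n := by
    rw [Finset.prod_congr rfl fun k hk => radSum_of_eq_zero (hzero k hk), ← Nat.cast_prod,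
      ← Nat.cast_mul, Mgen_mul_prod_Ico htn]
  refine mul_left_cancel₀ (Mgen_cast_ne_zero (m := m) n) ?_
  rw [Mgen_mul_Kker_Mgen_of_mem_Icyl_diff htn hx, ← hprod]
  ring

theorem Kker_Mgen_eq_zero_of_update_not_mem {t n : ℕ} {x : G m} (htn : t < n)
    (hx : x ∈ Icyl m t \ Icyl m (t + 1)) (hu : Function.update x t 0 ∉ Icyl m n) :
    Kker m (Mgen m n) x = 0 := by
  obtain ⟨s, hsn, hs⟩ : ∃ s < n, Function.update x t 0 s ≠ 0 := by
    simpa [mem_Icyl_iff] using hu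
  have hst : s ≠ t := by
    rintro rfl
    simp at hs
  rw [Function.update_of_ne hst] at hs
  have hts : t < s := lt_of_le_of_ne (not_lt.mp fun h => hs (hx.1 s h)) hst.symm
  refine mul_left_cancel₀ (Mgen_cast_ne_zero (m := m) n) ?_
  rw [Mgen_mul_Kker_Mgen_of_mem_Icyl_diff htn hx,
    Finset.prod_eq_zero (Finset.mem_Ico.mpr ⟨hts, hsn⟩) (radSum_of_ne_zero hs),
    zero_mul, mul_zero]

end

/-- `Function.update x t 0` is the element `x - x_t e_t`. -/
theorem fejer_kernel_Mn (m : ℕ → ℕ) (n : ℕ) (x : G m) :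
    (∀ t : ℕ, t < n → x ∈ Icyl m t \ Icyl m (t + 1) →
        Function.update x t 0 ∈ Icyl m n →
        Kker m (Mgen m n) x = (Mgen m t : ℂ) / (1 - rad m t x)) ∧
    (x ∈ Icyl m n → Kker m (Mgen m n) x = ((Mgen m n : ℂ) + 1) / 2) ∧
    ((x ∉ Icyl m n ∧ ¬ ∃ t : ℕ, t < n ∧ x ∈ Icyl m t \ Icyl m (t + 1) ∧
        Function.update x t 0 ∈ Icyl m n) → Kker m (Mgen m n) x = 0) := by
  refine ⟨fun t htn hx hu => Kker_Mgen_of_update_mem htn hx hu, Kker_Mgen_of_mem_Icyl, ?_⟩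
  rintro ⟨hx, hne⟩
  obtain ⟨t, htn, hxt⟩ := exists_lt_mem_Icyl_diff hx
  exact Kker_Mgen_eq_zero_of_update_not_mem htn hxt fun hu => hne ⟨t, htn, hxt, hu⟩

end VilPaper
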